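/- arXiv:math/9810016 — 2 statements merged into one kernel-verified Lean document; each statement's English description precedes it below -/
import Mathlib

section
/- Let g be a finite dimensional Lie algebra of dimension n over a field k, and h ⊆ g an ideal of dimension m such that the quotient g/h acts trivially on ⋀^{n-m}(g/h) (e.g. when h = [g,g]). Then ⋀^m h and ⋀^n g are isomorphic as one-dimensional representations of g (under the adjoint action). -/
/-!
The derivation extension of an endomorphism `f` of a free module of rank `r` acts on the
line `⋀^r M` as multiplication by `tr f`, and the trace of `ad x` is additive along
`0 → h → g → g/h → 0`. Triviality of the action on `⋀^{n-m}(g/h)` kills the quotient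
trace, so `g` acts on the lines `⋀^m h` and `⋀^n g` by the same character, and any linear
isomorphism between them is equivariant.
-/

open ExteriorAlgebra

/-- The `n`-fold wedge as an element of the `n`-th exterior power. -/
def expWedge (k : Type*) [Field k] {M : Type*} [AddCommGroup M] [Module k M]
    (n : ℕ) (y : Fin n → M) : ⋀[k]^n M :=
  ⟨ExteriorAlgebra.ιMulti k n y, ExteriorAlgebra.ιMulti_range k n (Set.mem_range_self y)⟩

open Module

theorem AlternatingMap.map_update_sum_smul_self {R M N ι : Type*} [CommRing R] [AddCommGroup M]
    [Module R M] [AddCommGroup N] [Module R N] [Fintype ι] [DecidableEq ι]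
    (F : M [⋀^ι]→ₗ[R] N) (v : ι → M) (p : ι) (c : ι → R) :
    F (Function.update v p (∑ q, c q • v q)) = c p • F v := by
  rw [← F.coe_multilinearMap, MultilinearMap.map_update_sum, Finset.sum_eq_single p]
  · rw [MultilinearMap.map_update_smul, Function.update_eq_self]
  · intro q _ hqp
    rw [MultilinearMap.map_update_smul, F.coe_multilinearMap,
      F.map_eq_zero_of_eq _ (by simp [Function.update_of_ne hqp]) hqp.symm, smul_zero]
  · exact fun hp => absurd (Finset.mem_univ p) hp

namespace exteriorPower

variable {R M : Type*} [CommRing R] [AddCommGroup M] [Module R M] {r : ℕ}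

theorem ιMulti_eq_det_smul (b : Basis (Fin r) R M) (v : Fin r → M) :
    ιMulti R r v = b.det v • ιMulti R r b := by
  suffices h : ιMulti R r = b.det.smulRight (ιMulti R r b) from
    (DFunLike.congr_fun h v).trans (AlternatingMap.smulRight_apply _ _ _)
  refine b.ext_alternating fun σ hσ => ?_
  let e : Equiv.Perm (Fin r) := Equiv.ofBijective σ (Finite.injective_iff_bijective.1 hσ)
  change ιMulti R r (b ∘ e) = b.det.smulRight (ιMulti R r b) (b ∘ e)
  rw [AlternatingMap.smulRight_apply, AlternatingMap.map_perm, AlternatingMap.map_perm,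
    b.det_self, Units.smul_def, Units.smul_def, smul_one_smul]

theorem exists_eq_smul_ιMulti_basis (b : Basis (Fin r) R M) (ω : ⋀[R]^r M) :
    ∃ c : R, ω = c • ιMulti R r b := by
  have hspan : Submodule.span R (Set.range (ιMulti R r (M := M))) ≤ R ∙ ιMulti R r b :=
    Submodule.span_le.2 <| Set.range_subset_iff.2 fun v =>
      Submodule.mem_span_singleton.2 ⟨b.det v, (ιMulti_eq_det_smul b v).symm⟩
  obtain ⟨c, hc⟩ :=
    Submodule.mem_span_singleton.1 (hspan (ιMulti_span R r (M := M) ▸ Submodule.mem_top))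
  exact ⟨c, hc.symm⟩

theorem sum_ιMulti_update_basis_eq_trace_smul (b : Basis (Fin r) R M) (f : Module.End R M) :
    ∑ p, ιMulti R r (Function.update b p (f (b p))) =
      LinearMap.trace R M f • ιMulti R r b := by
  classical
  rw [LinearMap.trace_eq_matrix_trace R b, Matrix.trace, Finset.sum_smul]
  refine Finset.sum_congr rfl fun p _ => ?_
  conv_lhs => rw [← b.sum_repr (f (b p))]
  rw [AlternatingMap.map_update_sum_smul_self, Matrix.diag_apply, LinearMap.toMatrix_apply]

theorem finrank_eq_one_of_finrank_eq [Nontrivial R] [Free R M] [Module.Finite R M]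
    (hr : finrank R M = r) : finrank R (⋀[R]^r M) = 1 := by
  rw [finrank_eq, hr, Nat.choose_self]

theorem eq_trace_smul_one_of_apply_ιMulti_basis (b : Basis (Fin r) R M) (f : Module.End R M)
    (D : Module.End R (⋀[R]^r M))
    (hD : D (ιMulti R r b) = ∑ p, ιMulti R r (Function.update b p (f (b p)))) :
    D = LinearMap.trace R M f • 1 := by
  refine LinearMap.ext fun ω => ?_
  obtain ⟨c, rfl⟩ := exists_eq_smul_ιMulti_basis b ω
  rw [map_smul, hD, sum_ιMulti_update_basis_eq_trace_smul, LinearMap.smul_apply,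
    Module.End.one_apply, smul_comm]

end exteriorPower

namespace LinearMap

variable {R V : Type*} [CommRing R] [AddCommGroup V] [Module R V] [Module.Finite R V]
    (W : Submodule R V) [Free R W] [Module.Finite R W] [Free R (V ⧸ W)]

theorem trace_eq_trace_restrict_add_trace_mapQ (e : V →ₗ[R] V) (he : W ≤ W.comap e) :
    trace R V e = trace R W (e.restrict he) + trace R (V ⧸ W) (W.mapQ W e he) := by
  let bW := Free.chooseBasis R W
  let bQ := Free.chooseBasis R (V ⧸ W)
  rw [trace_eq_matrix_trace R (bW.sumQuot bQ), trace_eq_matrix_trace R bW,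
    trace_eq_matrix_trace R bQ, Matrix.trace, Matrix.trace, Matrix.trace, Fintype.sum_sum_type]
  congr 1 <;> refine Finset.sum_congr rfl fun i _ => ?_
  · simp only [Matrix.diag_apply, toMatrix_apply, Basis.sumQuot_inl]
    exact Basis.sumQuot_repr_inl_of_mem bW bQ _ (he (bW i).2) i
  · simp only [Matrix.diag_apply, toMatrix_apply, Basis.sumQuot_repr_inr]
    rw [← Basis.sumQuot_inr bW bQ i, W.mapQ_apply]
    rfl

end LinearMap

theorem LieSubmodule.trace_toEnd_eq_trace_toEnd_add_trace_toEnd_quotient {R L M : Type*}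
    [CommRing R] [LieRing L] [LieAlgebra R L] [AddCommGroup M] [Module R M] [LieRingModule L M]
    [LieModule R L M] [Module.Finite R M] (N : LieSubmodule R L M)
    [Free R N] [Module.Finite R N] [Free R (M ⧸ N)] (x : L) :
    LinearMap.trace R M (LieModule.toEnd R L M x) =
      LinearMap.trace R N (LieModule.toEnd R L N x) +
        LinearMap.trace R (M ⧸ N) (LieModule.toEnd R L (M ⧸ N) x) :=
  LinearMap.trace_eq_trace_restrict_add_trace_mapQ (N : Submodule R M) _ fun _ hm => N.lie_mem hm

theorem exterior_power_ideal_iso_top_exterior_power_general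
    (k : Type*) [Field k] (g : Type*) [LieRing g] [LieAlgebra k g]
    [FiniteDimensional k g] (h : LieIdeal k g) (n m : ℕ)
    (hn : Module.finrank k g = n) (hm : Module.finrank k h = m)
    -- the adjoint action of `g` on `⋀^m h`
    (ρh : g →ₗ[k] Module.End k (⋀[k]^m h))
    (hρh : ∀ (x : g) (y : Fin m → h),
      ρh x (expWedge k m y) =
        ∑ p : Fin m, expWedge k m
          (Function.update y p ⟨⁅x, (y p : g)⁆, h.lie_mem (y p).2⟩))
    -- the adjoint action of `g` on `⋀^n g`
    (ρg : g →ₗ[k] Module.End k (⋀[k]^n g))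
    (hρg : ∀ (x : g) (y : Fin n → g),
      ρg x (expWedge k n y) = ∑ p : Fin n, expWedge k n (Function.update y p ⁅x, y p⁆))
    -- the induced adjoint action of `g` on `⋀^{n-m}(g/h)`, assumed trivial
    (τ : g →ₗ[k] Module.End k (⋀[k]^(n - m) (g ⧸ h)))
    (hτ : ∀ (x : g) (y : Fin (n - m) → g ⧸ h),
      τ x (expWedge k (n - m) y) =
        ∑ p : Fin (n - m), expWedge k (n - m) (Function.update y p ⁅x, y p⁆))
    (hτtriv : τ = 0) :
    ∃ e : (⋀[k]^m h) ≃ₗ[k] (⋀[k]^n g),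
      ∀ (x : g) (ω : ⋀[k]^m h), e (ρh x ω) = ρg x (e ω) := by
  have hq : finrank k (g ⧸ h) = n - m := by
    have := Submodule.finrank_quotient_add_finrank (h : Submodule k g)
    change finrank k (g ⧸ h) + finrank k h = _ at this
    omega
  have htop_h := exteriorPower.finrank_eq_one_of_finrank_eq hm
  have htop_g := exteriorPower.finrank_eq_one_of_finrank_eq hn
  have htop_q := exteriorPower.finrank_eq_one_of_finrank_eq hq
  -- `expWedge` is `exteriorPower.ιMulti` by definition, and each bracket in `hρh`, `hρg`, `hτ`
  -- is the adjoint action `LieModule.toEnd` on the respective module.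
  have hρh' (x : g) : ρh x = LinearMap.trace k h (LieModule.toEnd k g h x) • 1 :=
    exteriorPower.eq_trace_smul_one_of_apply_ιMulti_basis _ _ _
      (hρh x (finBasisOfFinrankEq _ _ hm))
  have hρg' (x : g) : ρg x = LinearMap.trace k g (LieModule.toEnd k g g x) • 1 :=
    exteriorPower.eq_trace_smul_one_of_apply_ιMulti_basis _ _ _
      (hρg x (finBasisOfFinrankEq _ _ hn))
  have hτ' (x : g) : τ x = LinearMap.trace k (g ⧸ h) (LieModule.toEnd k g (g ⧸ h) x) • 1 :=
    exteriorPower.eq_trace_smul_one_of_apply_ιMulti_basis _ _ _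
      (hτ x (finBasisOfFinrankEq _ _ hq))
  have htrace_quot (x : g) : LinearMap.trace k (g ⧸ h) (LieModule.toEnd k g (g ⧸ h) x) = 0 := by
    have : Nontrivial (⋀[k]^(n - m) (g ⧸ h)) := nontrivial_of_finrank_eq_succ htop_q
    have hτx := hτ' x
    rw [hτtriv, LinearMap.zero_apply, eq_comm, smul_eq_zero] at hτx
    exact hτx.resolve_right one_ne_zero
  refine ⟨LinearEquiv.ofFinrankEq _ _ (htop_h.trans htop_g.symm), fun x ω => ?_⟩
  rw [hρh', hρg', h.trace_toEnd_eq_trace_toEnd_add_trace_toEnd_quotient, htrace_quot, add_zero]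
  simp only [LinearMap.smul_apply, Module.End.one_apply, map_smul]

/-- Let `g` be an `n`-dimensional Lie algebra over a field `k` and `h ⊆ g` an `m`-dimensional
ideal such that the induced adjoint action of `g` on `⋀^{n-m}(g/h)` is trivial (e.g. when
`h = [g,g]`).  Then `⋀^m h` and `⋀^n g` are isomorphic as one-dimensional representations of
`g` under the adjoint action (extended by derivations to exterior powers). -/
theorem exterior_power_ideal_iso_top_exterior_power
    (k : Type*) [Field k] (g : Type*) [LieRing g] [LieAlgebra k g]
    [FiniteDimensional k g] (h : LieIdeal k g) (n m : ℕ)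
    (hn : Module.finrank k g = n) (hm : Module.finrank k h = m) (hmn : m ≤ n)
    -- the adjoint action of `g` on `⋀^m h`
    (ρh : g →ₗ[k] Module.End k (⋀[k]^m h))
    (hρh : ∀ (x : g) (y : Fin m → h),
      ρh x (expWedge k m y) =
        ∑ p : Fin m, expWedge k m
          (Function.update y p ⟨⁅x, (y p : g)⁆, h.lie_mem (y p).2⟩))
    -- the adjoint action of `g` on `⋀^n g`
    (ρg : g →ₗ[k] Module.End k (⋀[k]^n g))
    (hρg : ∀ (x : g) (y : Fin n → g),
      ρg x (expWedge k n y) = ∑ p : Fin n, expWedge k n (Function.update y p ⁅x, y p⁆))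
    -- the induced adjoint action of `g` on `⋀^{n-m}(g/h)`, assumed trivial
    (τ : g →ₗ[k] Module.End k (⋀[k]^(n - m) (g ⧸ h)))
    (hτ : ∀ (x : g) (y : Fin (n - m) → g ⧸ h),
      τ x (expWedge k (n - m) y) =
        ∑ p : Fin (n - m), expWedge k (n - m) (Function.update y p ⁅x, y p⁆))
    (hτtriv : τ = 0) :
    ∃ e : (⋀[k]^m h) ≃ₗ[k] (⋀[k]^n g),
      ∀ (x : g) (ω : ⋀[k]^m h), e (ρh x ω) = ρg x (e ω) :=
  exterior_power_ideal_iso_top_exterior_power_general k g h n m hn hm ρh hρh ρg hρg τ hτ hτtriv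
end

section
/- Let A be a positively filtered k-algebra with gr A commutative and gr₀ A = k, and let g := gr₁ A with its induced Lie bracket. Let γ be a filtered k-algebra automorphism of A such that gr(γ) is the identity. Then the map λ : g → k defined by λ(ā) := γ(a) − a for a ∈ F₁A (where ā denotes the symbol of a) is a well-defined Lie algebra homomorphism, i.e. it is k-linear and vanishes on brackets, and γ(a) = a + λ(ā) for all a ∈ F₁A. -/
/-- Let `A` be a positively filtered `k`-algebra with `gr A` commutative and `F₀A = k·1`, and
let `g := gr₁ A = F₁A/F₀A` with its induced Lie bracket.  Let `γ` be a filtered `k`-algebra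
automorphism of `A` such that `gr(γ)` is the identity.  Then the map `λ : g → k` defined by
`λ(ā) := γ(a) − a` for `a ∈ F₁A` is a well-defined Lie algebra homomorphism: there is a
`k`-linear `lam : F₁A → k` with `γ(a) = a + lam(a)·1` for `a ∈ F₁A`, vanishing on `F₀A` (so it
factors through the symbols `g = F₁A/F₀A`) and vanishing on all commutators (brackets). -/
theorem filtered_automorphism_gr_identity_gives_lie_character
    (k : Type*) [Field k] (A : Type*) [Ring A] [Algebra k A]
    (F : ℕ → Submodule k A) (hmono : Monotone F)
    (hF0 : F 0 = Submodule.span k {(1 : A)})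
    (hexh : ∀ a : A, ∃ i, a ∈ F i)
    (hmul : ∀ i j : ℕ, ∀ a b : A, a ∈ F i → b ∈ F j → a * b ∈ F (i + j))
    (hcomm : ∀ i j : ℕ, ∀ a b : A, a ∈ F i → b ∈ F j → a * b - b * a ∈ F (i + j - 1))
    (γ : A ≃ₐ[k] A)
    (hfil : ∀ i : ℕ, ∀ a ∈ F i, γ a ∈ F i)
    (hgr0 : ∀ a ∈ F 0, γ a = a)
    (hgr : ∀ i : ℕ, ∀ a ∈ F (i + 1), γ a - a ∈ F i) :
    ∃ lam : F 1 →ₗ[k] k,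
      (∀ a : F 1, γ (a : A) = (a : A) + lam a • (1 : A)) ∧
      (∀ a : F 1, (a : A) ∈ F 0 → lam a = 0) ∧
      (∀ a b : F 1, ∀ hc : (a : A) * b - (b : A) * a ∈ F 1,
        lam ⟨(a : A) * b - (b : A) * a, hc⟩ = 0) := by
  by_cases hA : (1:A) = 0
  · haveI : Subsingleton A := subsingleton_of_zero_eq_one hA.symm
    exact ⟨0, fun a => Subsingleton.elim _ _, fun a _ => rfl, fun a b hc => rfl⟩
  · haveI : Nontrivial A := nontrivial_of_ne 1 0 hA
    have hinj : Function.Injective (algebraMap k A) := (algebraMap k A).injective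
    have hinj1 : Function.Injective (fun c : k => c • (1:A)) := by
      intro c d h
      apply hinj
      simpa [Algebra.algebraMap_eq_smul_one] using h
    have key : ∀ a : F 1, ∃ c : k, γ (a:A) - a = c • (1:A) := by
      intro a
      have h : γ (a:A) - a ∈ F 0 := hgr 0 a a.2
      rw [hF0, Submodule.mem_span_singleton] at h
      obtain ⟨c, hc⟩ := h
      exact ⟨c, hc.symm⟩
    choose f hf using key
    have hγ : ∀ a : F 1, γ (a:A) = (a:A) + f a • (1:A) := by
      intro a
      have := hf a
      linear_combination (norm := noncomm_ring) this
    have huniq : ∀ (a : F 1) (c : k), γ (a:A) - a = c • (1:A) → f a = c := by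
      intro a c h
      exact hinj1 (show f a • (1:A) = c • 1 by rw [← hf a, h])
    have hadd : ∀ a b : F 1, f (a + b) = f a + f b := by
      intro a b
      apply huniq
      push_cast
      rw [map_add, add_smul]
      have ha := hf a
      have hb := hf b
      linear_combination (norm := noncomm_ring) ha + hb
    have hsmul : ∀ (c : k) (a : F 1), f (c • a) = c * f a := by
      intro c a
      apply huniq
      push_cast
      rw [map_smul, mul_smul]
      have ha := hf a
      rw [← smul_sub, ha]
    refine ⟨{ toFun := f, map_add' := hadd, map_smul' := fun c a => hsmul c a }, hγ, ?_, ?_⟩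
    · intro a ha
      apply hinj1
      simp only [LinearMap.coe_mk, AddHom.coe_mk]
      rw [← hf a, hgr0 a ha, sub_self, zero_smul]
    · intro a b hc
      have hcen : ∀ (c : k) (x y : A), (x + c • (1:A)) * y = x * y + c • y ∧
          y * (x + c • (1:A)) = y * x + c • y := by
        intro c x y
        constructor
        · rw [add_mul, smul_mul_assoc, one_mul]
        · rw [mul_add, mul_smul_comm, mul_one]
      have : f ⟨(a : A) * b - (b : A) * a, hc⟩ = 0 := by
        apply huniq
        rw [zero_smul]
        have h1 : γ ((a:A) * b - (b:A) * a) = γ (a:A) * γ (b:A) - γ (b:A) * γ (a:A) := by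
          rw [map_sub, map_mul, map_mul]
        rw [h1, hγ a, hγ b]
        rw [(hcen (f a) (a:A) _).1, (hcen (f b) (b:A) _).1]
        rw [mul_add, mul_smul_comm, mul_add, mul_smul_comm]
        rw [smul_add, smul_add, smul_smul, smul_smul]
        simp only [mul_one, mul_comm (f b) (f a)]
        abel
      simpa using this
end
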